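/- Let K be the three-dimensional complex Lie algebra with basis {x, y, z} and brackets [x, y] = y, [x, z] = −z, [y, z] = 0, and let φ : K → K be the linear map determined by φ(x) = 0, φ(y) = z, φ(z) = 0. Then φ is not a derivation of K: there exist u, v ∈ K with φ([u, v]) ≠ [φ(u), v] + [u, φ(v)] (indeed one may take u = x, v = y). Consequently, for odd N ≥ 3 the inclusion Der(K) ⊆ Der^(N)(K) is proper. -/

import Mathlib

open scoped BigOperators

/-- Right-iterated Lie bracket `[x₁, x₂, …, xₖ] = [x₁, [x₂, [… [x_{k-1}, xₖ] …]]]`. -/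
def itBracket {L : Type*} [LieRing L] : List L → L
  | [] => 0
  | [a] => a
  | a :: b :: l => ⁅a, itBracket (b :: l)⁆

/-- `φ` is an `N`-derivation of the Lie algebra `L`:
`φ [x₁, …, x_N] = ∑ i, [x₁, …, x_{i-1}, φ xᵢ, x_{i+1}, …, x_N]`. -/
def IsNDeriv (F : Type*) {L : Type*} [CommRing F] [LieRing L] [LieAlgebra F L]
    (N : ℕ) (φ : L →ₗ[F] L) : Prop :=
  ∀ x : Fin N → L,
    φ (itBracket (List.ofFn x)) =
      ∑ i : Fin N, itBracket (List.ofFn (Function.update x i (φ (x i))))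

section Aux

lemma itBracket_cons {L : Type*} [LieRing L] (a : L) (l : List L) (h : l ≠ []) :
    itBracket (a :: l) = ⁅a, itBracket l⁆ := by
  cases l with
  | nil => exact absurd rfl h
  | cons b t => rfl

lemma lie_sum' {L : Type*} [LieRing L] (x : L) {ι : Type*} (s : Finset ι) (f : ι → L) :
    ⁅x, ∑ i ∈ s, f i⁆ = ∑ i ∈ s, ⁅x, f i⁆ :=
  map_sum (AddMonoidHom.mk' (fun y => ⁅x, y⁆) (lie_add x)) f s

lemma ofFn_snoc' {L : Type*} {m : ℕ} (g : Fin m → L) (c : L) :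
    List.ofFn (Fin.snoc g c) = List.ofFn g ++ [c] := by
  rw [List.ofFn_succ']
  simp [Fin.snoc_castSucc, Fin.snoc_last, List.concat_eq_append]

/-- A derivation is an `N`-derivation for every `N = n+1`. -/
lemma deriv_isNDeriv {L : Type*} [LieRing L] [LieAlgebra ℂ L] (ψ : L →ₗ[ℂ] L)
    (hψ : ∀ u v : L, ψ ⁅u, v⁆ = ⁅ψ u, v⁆ + ⁅u, ψ v⁆) :
    ∀ n : ℕ, IsNDeriv ℂ (n + 1) ψ := by
  intro n
  induction n with
  | zero =>
    intro x
    simp [List.ofFn_succ, itBracket]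
  | succ n ih =>
    intro x
    have htail : ψ (itBracket (List.ofFn fun i => x i.succ)) =
        ∑ j : Fin (n + 1), itBracket (List.ofFn
          (Function.update (fun i => x i.succ) j (ψ (x j.succ)))) := ih (fun i => x i.succ)
    have h0 : itBracket (List.ofFn (Function.update x 0 (ψ (x 0)))) =
        ⁅ψ (x 0), itBracket (List.ofFn fun i => x i.succ)⁆ := by
      rw [List.ofFn_succ (f := Function.update x 0 (ψ (x 0))), itBracket_cons _ _ (by simp),
        Function.update_self]
      have he : (fun i : Fin (n + 1) => Function.update x 0 (ψ (x 0)) i.succ)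
          = fun i => x i.succ := by
        funext i
        exact Function.update_of_ne (Fin.succ_ne_zero i) _ _
      rw [he]
    have h1 : ∀ j : Fin (n + 1), itBracket (List.ofFn (Function.update x j.succ (ψ (x j.succ)))) =
        ⁅x 0, itBracket (List.ofFn (Function.update (fun i => x i.succ) j (ψ (x j.succ))))⁆ := by
      intro j
      rw [List.ofFn_succ (f := Function.update x j.succ (ψ (x j.succ))), itBracket_cons _ _ (by simp),
        Function.update_of_ne (Fin.succ_ne_zero j).symm]
      have he : (fun i : Fin (n + 1) => Function.update x j.succ (ψ (x j.succ)) i.succ)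
          = Function.update (fun k => x k.succ) j (ψ (x j.succ)) := by
        funext i
        rcases eq_or_ne i j with rfl | h
        · simp
        · rw [Function.update_of_ne h,
            Function.update_of_ne (fun hc => h (Fin.succ_injective _ hc))]
      rw [he]
    rw [List.ofFn_succ (f := x), itBracket_cons _ _ (by simp), hψ, htail, lie_sum']
    conv_rhs => rw [Fin.sum_univ_succ]
    rw [h0]
    congr 1
    exact Finset.sum_congr rfl fun j _ => (h1 j).symm

variable {K : Type*} [LieRing K] [LieAlgebra ℂ K] (B : Module.Basis (Fin 3) ℂ K)
  (hxy : ⁅B 0, B 1⁆ = B 1) (hxz : ⁅B 0, B 2⁆ = -B 2) (hyz : ⁅B 1, B 2⁆ = 0)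

lemma expand3 (a : K) :
    a = B.repr a 0 • B 0 + B.repr a 1 • B 1 + B.repr a 2 • B 2 := by
  have h := B.sum_repr a
  rw [Fin.sum_univ_three] at h
  exact h.symm

include hxy hxz hyz in
lemma lie_formula (a b : K) :
    ⁅a, b⁆ = (B.repr a 0 * B.repr b 1 - B.repr a 1 * B.repr b 0) • B 1
      + (B.repr a 2 * B.repr b 0 - B.repr a 0 * B.repr b 2) • B 2 := by
  have h10 : ⁅B 1, B 0⁆ = -B 1 := by rw [← lie_skew, hxy]
  have h20 : ⁅B 2, B 0⁆ = B 2 := by rw [← lie_skew, hxz]; simp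
  have h21 : ⁅B 2, B 1⁆ = -(0 : K) := by rw [← lie_skew, hyz]
  conv_lhs => rw [expand3 B a, expand3 B b]
  simp only [add_lie, lie_add, smul_lie, lie_smul, lie_self, hxy, hxz, hyz, h10, h20, h21,
    smul_neg, smul_zero, add_zero, zero_add, neg_zero, smul_smul]
  module

variable (φ : K →ₗ[ℂ] K) (hφx : φ (B 0) = 0) (hφy : φ (B 1) = B 2) (hφz : φ (B 2) = 0)

include hφx hφy hφz in
lemma phi_formula (v : K) : φ v = B.repr v 1 • B 2 := by
  conv_lhs => rw [expand3 B v]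
  simp [hφx, hφy, hφz]

include hxy hxz hyz in
lemma itB (n : ℕ) (f : Fin n → K) (a b : K) :
    itBracket (List.ofFn f ++ [a, b]) =
      ((∏ i, B.repr (f i) 0) * (B.repr a 0 * B.repr b 1 - B.repr a 1 * B.repr b 0)) • B 1 +
      ((-1 : ℂ) ^ n * (∏ i, B.repr (f i) 0) *
        (B.repr a 2 * B.repr b 0 - B.repr a 0 * B.repr b 2)) • B 2 := by
  induction n with
  | zero =>
    simp only [List.ofFn_zero, List.nil_append, Finset.univ_eq_empty, Finset.prod_empty,
      pow_zero, one_mul]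
    show ⁅a, itBracket [b]⁆ = _
    rw [show itBracket [b] = b from rfl, lie_formula B hxy hxz hyz a b]
  | succ n ih =>
    have l1 : ∀ c : K, ⁅c, B 1⁆ = B.repr c 0 • B 1 := by
      intro c
      rw [lie_formula B hxy hxz hyz c (B 1)]
      simp [Module.Basis.repr_self_apply]
    have l2 : ∀ c : K, ⁅c, B 2⁆ = -(B.repr c 0 • B 2) := by
      intro c
      rw [lie_formula B hxy hxz hyz c (B 2)]
      simp [Module.Basis.repr_self_apply]
    rw [List.ofFn_succ, List.cons_append, itBracket_cons _ _ (by simp),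
      ih (fun i => f i.succ), lie_add, lie_smul, lie_smul, l1, l2, Fin.prod_univ_succ]
    match_scalars <;> ring

include hxy hxz hyz hφx hφy hφz in
set_option maxHeartbeats 1000000 in
lemma phi_isNDeriv (n : ℕ) (hn : Odd n) : IsNDeriv ℂ (n + 2) φ := by
  have r0 : ∀ v : K, B.repr (φ v) 0 = 0 := by
    intro v; rw [phi_formula B φ hφx hφy hφz]; simp [Finsupp.single_apply]
  have r1 : ∀ v : K, B.repr (φ v) 1 = 0 := by
    intro v; rw [phi_formula B φ hφx hφy hφz]; simp [Finsupp.single_apply]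
  have r2 : ∀ v : K, B.repr (φ v) 2 = B.repr v 1 := by
    intro v; rw [phi_formula B φ hφx hφy hφz]; simp [Finsupp.single_apply]
  intro x
  suffices h : ∀ (f : Fin n → K) (a b : K),
      φ (itBracket (List.ofFn (Fin.snoc (Fin.snoc f a : Fin (n + 1) → K) b : Fin (n + 2) → K))) =
        ∑ i : Fin (n + 2), itBracket (List.ofFn (Function.update
          (Fin.snoc (Fin.snoc f a : Fin (n + 1) → K) b : Fin (n + 2) → K) i
          (φ ((Fin.snoc (Fin.snoc f a : Fin (n + 1) → K) b : Fin (n + 2) → K) i)))) by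
    have := h (Fin.init (Fin.init x)) (Fin.init x (Fin.last n)) (x (Fin.last (n + 1)))
    simpa only [Fin.snoc_init_self] using this
  intro f a b
  have hlist : ∀ (g : Fin n → K) (u v : K),
      List.ofFn (Fin.snoc (Fin.snoc g u : Fin (n + 1) → K) v : Fin (n + 2) → K)
        = List.ofFn g ++ [u, v] := by
    intro g u v
    rw [ofFn_snoc', ofFn_snoc', List.append_assoc]
    rfl
  -- LHS
  rw [hlist, itB B hxy hxz hyz, map_add, map_smul, map_smul, hφy, hφz, smul_zero, add_zero]
  -- RHS: split the sum
  conv_rhs => rw [Fin.sum_univ_castSucc, Fin.sum_univ_castSucc]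
  have hb : (Fin.snoc (Fin.snoc f a : Fin (n + 1) → K) b : Fin (n + 2) → K) (Fin.last (n + 1))
      = b := Fin.snoc_last _ _
  have ha : (Fin.snoc (Fin.snoc f a : Fin (n + 1) → K) b : Fin (n + 2) → K)
      ((Fin.last n).castSucc) = a := by
    rw [Fin.snoc_castSucc, Fin.snoc_last]
  have hf : ∀ i : Fin n, (Fin.snoc (Fin.snoc f a : Fin (n + 1) → K) b : Fin (n + 2) → K)
      (i.castSucc.castSucc) = f i := by
    intro i; rw [Fin.snoc_castSucc, Fin.snoc_castSucc]
  have tb : Function.update (Fin.snoc (Fin.snoc f a : Fin (n + 1) → K) b : Fin (n + 2) → K)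
      (Fin.last (n + 1))
      (φ ((Fin.snoc (Fin.snoc f a : Fin (n + 1) → K) b : Fin (n + 2) → K) (Fin.last (n + 1))))
      = (Fin.snoc (Fin.snoc f a : Fin (n + 1) → K) (φ b) : Fin (n + 2) → K) := by
    rw [hb, Fin.update_snoc_last]
  have ta : Function.update (Fin.snoc (Fin.snoc f a : Fin (n + 1) → K) b : Fin (n + 2) → K)
      ((Fin.last n).castSucc)
      (φ ((Fin.snoc (Fin.snoc f a : Fin (n + 1) → K) b : Fin (n + 2) → K)
        ((Fin.last n).castSucc)))
      = (Fin.snoc (Fin.snoc f (φ a) : Fin (n + 1) → K) b : Fin (n + 2) → K) := by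
    rw [ha, ← Fin.snoc_update, Fin.update_snoc_last]
  have tf : ∀ i : Fin n,
      Function.update (Fin.snoc (Fin.snoc f a : Fin (n + 1) → K) b : Fin (n + 2) → K)
        (i.castSucc.castSucc)
        (φ ((Fin.snoc (Fin.snoc f a : Fin (n + 1) → K) b : Fin (n + 2) → K)
          (i.castSucc.castSucc)))
      = (Fin.snoc (Fin.snoc (Function.update f i (φ (f i))) a : Fin (n + 1) → K) b :
          Fin (n + 2) → K) := by
    intro i
    rw [hf, ← Fin.snoc_update, ← Fin.snoc_update]
  have hfront : ∀ i : Fin n,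
      itBracket (List.ofFn (Function.update
        (Fin.snoc (Fin.snoc f a : Fin (n + 1) → K) b : Fin (n + 2) → K) (i.castSucc.castSucc)
        (φ ((Fin.snoc (Fin.snoc f a : Fin (n + 1) → K) b : Fin (n + 2) → K)
          (i.castSucc.castSucc))))) = 0 := by
    intro i
    rw [tf i, hlist, itB B hxy hxz hyz]
    have hz : (∏ j, B.repr (Function.update f i (φ (f i)) j) 0) = 0 := by
      apply Finset.prod_eq_zero (Finset.mem_univ i)
      rw [Function.update_self, r0]
    rw [hz]
    simp
  rw [tb, ta, Finset.sum_congr rfl (fun i _ => hfront i), Finset.sum_const_zero, zero_add,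
    hlist, hlist, itB B hxy hxz hyz, itB B hxy hxz hyz]
  rw [r0, r1, r2, r0, r1, r2]
  have hneg : (-1 : ℂ) ^ n = -1 := Odd.neg_one_pow hn
  rw [hneg]
  match_scalars <;> ring

end Aux

/-- Let `K` be the three-dimensional complex Lie algebra with basis `{x, y, z}` and brackets
`[x,y] = y`, `[x,z] = -z`, `[y,z] = 0`, and let `φ` be the linear map with `φ x = 0`,
`φ y = z`, `φ z = 0`.  Then `φ` is not a derivation of `K` (it fails the Leibniz rule at
`u = x`, `v = y`); consequently, for every odd `N ≥ 3` the inclusion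
`Der(K) ⊆ Der⁽ᴺ⁾(K)` is proper. -/
theorem example_not_derivation
    (K : Type*) [LieRing K] [LieAlgebra ℂ K] (B : Module.Basis (Fin 3) ℂ K)
    (hxy : ⁅B 0, B 1⁆ = B 1) (hxz : ⁅B 0, B 2⁆ = -B 2) (hyz : ⁅B 1, B 2⁆ = 0)
    (φ : K →ₗ[ℂ] K) (hφx : φ (B 0) = 0) (hφy : φ (B 1) = B 2) (hφz : φ (B 2) = 0)
 :
    φ ⁅B 0, B 1⁆ ≠ ⁅φ (B 0), B 1⁆ + ⁅B 0, φ (B 1)⁆ ∧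
      ∀ N : ℕ, 3 ≤ N → Odd N →
        {ψ : K →ₗ[ℂ] K | ∀ x y : K, ψ ⁅x, y⁆ = ⁅ψ x, y⁆ + ⁅x, ψ y⁆} ⊂
          {ψ : K →ₗ[ℂ] K | IsNDeriv ℂ N ψ} := by
  have hnotder : φ ⁅B 0, B 1⁆ ≠ ⁅φ (B 0), B 1⁆ + ⁅B 0, φ (B 1)⁆ := by
    rw [hxy, hφy, hφx, zero_lie, zero_add, hxz]
    intro h
    have h2 : (2 : ℂ) • B 2 = 0 := by
      rw [two_smul]
      nth_rewrite 1 [h]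
      abel
    rcases smul_eq_zero.mp h2 with h' | h'
    · norm_num at h'
    · exact B.ne_zero 2 h'
  refine ⟨hnotder, fun N hN3 hNodd => ?_⟩
  rw [Set.ssubset_iff_of_subset]
  · refine ⟨φ, ?_, fun hmem => hnotder (hmem (B 0) (B 1))⟩
    obtain ⟨m, rfl⟩ : ∃ m, N = m + 2 := ⟨N - 2, by omega⟩
    have hmodd : Odd m := by
      obtain ⟨k, hk⟩ := hNodd
      exact ⟨k - 1, by omega⟩
    exact phi_isNDeriv B hxy hxz hyz φ hφx hφy hφz m hmodd
  · intro ψ hψ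
    obtain ⟨m, rfl⟩ : ∃ m, N = m + 1 := ⟨N - 1, by omega⟩
    exact deriv_isNDeriv ψ hψ m
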